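/- arXiv:1605.03735 — 5 statements merged into one kernel-verified Lean document; each statement's English description precedes it below -/
import Mathlib

section
/- In a balanced (Eulerian) directed multigraph in which every vertex has out-degree 2, the number of Eulerian circuits starting from a fixed edge equals the number of spanning arborescences rooted at any fixed vertex r. -/
/-!
Fix an out-edge `x` of `r`; rotating circuits shows the count does not depend on the starting
edge, so it suffices to count circuits starting with `x`. The last exits of such a circuit (for
each `v ≠ r`, the out-edge of `v` traversed last) form an arborescence rooted at `r`: following
last exits only moves forward in time until `r` is reached. Conversely, for an arborescence `T`,
the walk from `x` that uses an edge of `T` only when it is the last unused out-edge of its source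
can only get stuck at `r`, and by balance and the paths of `T` to `r` only after using every edge;
its last exits are `T`. With out-degree two a circuit is determined by `x` and its last exits:
where two such circuits first differ they leave a vertex `v` by its two out-edges, one of which
is the last exit of `v` in both, which is impossible (for `v = r` the first edge `x` would be a
third out-edge).
-/

/-- A finite directed multigraph. -/
structure Multidigraph where
  V : Type
  E : Type
  [fintypeV : Fintype V]
  [fintypeE : Fintype E]
  [decV : DecidableEq V]
  [decE : DecidableEq E]
  src : E → V
  tgt : E → V

attribute [instance] Multidigraph.fintypeV Multidigraph.fintypeE
  Multidigraph.decV Multidigraph.decE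

namespace Multidigraph

variable (D : Multidigraph)

noncomputable def outdeg (v : D.V) : ℕ := {e | D.src e = v}.ncard
noncomputable def indeg (v : D.V) : ℕ := {e | D.tgt e = v}.ncard

/-- Balanced (Eulerian): in-degree equals out-degree at every vertex. -/
def Balanced : Prop := ∀ v, D.indeg v = D.outdeg v

/-- Connectivity of the underlying undirected graph. -/
def Connected : Prop :=
  ∀ u w : D.V, Relation.ReflTransGen
    (fun a b => ∃ e, (D.src e = a ∧ D.tgt e = b) ∨ (D.src e = b ∧ D.tgt e = a)) u w

/-- One step along an edge of `T`. -/
def step (T : Set D.E) (u w : D.V) : Prop := ∃ e ∈ T, D.src e = u ∧ D.tgt e = w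

/-- `T` is a spanning arborescence rooted at `r`: every non-root vertex has a
unique outgoing edge in `T`, the root has none, and every vertex reaches the
root along `T`. -/
def IsArborescence (T : Set D.E) (r : D.V) : Prop :=
  (∀ v, v ≠ r → ∃! e, e ∈ T ∧ D.src e = v) ∧
  (∀ e ∈ T, D.src e ≠ r) ∧
  (∀ v, Relation.ReflTransGen (D.step T) v r)

/-- The arborescence number of `D` with respect to root `r`. -/
noncomputable def arbCount (r : D.V) : ℕ := {T : Set D.E | D.IsArborescence T r}.ncard

/-- An Eulerian circuit starting from the fixed edge `e₀`: a cyclic listing of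
all edges, each used exactly once, consecutive edges being head-to-tail. -/
def IsEulerCircuitFrom (e₀ : D.E) (f : ZMod (Fintype.card D.E) ≃ D.E) : Prop :=
  f 0 = e₀ ∧ ∀ i : ZMod (Fintype.card D.E), D.tgt (f i) = D.src (f (i + 1))

noncomputable def eulerCount (e₀ : D.E) : ℕ :=
  {f : ZMod (Fintype.card D.E) ≃ D.E | D.IsEulerCircuitFrom e₀ f}.ncard

end Multidigraph

open Finset

lemma ZMod.val_add_one_eq_or {n : ℕ} [NeZero n] (i : ZMod n) :
    (i.val + 1 < n ∧ (i + 1).val = i.val + 1) ∨ (i.val + 1 = n ∧ i + 1 = 0) := by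
  have hmod : (i + 1).val = (i.val + 1) % n := by
    rw [ZMod.val_add, ZMod.val_one_eq_one_mod, Nat.add_mod_mod]
  obtain hlt | heq : i.val + 1 < n ∨ i.val + 1 = n := by have := ZMod.val_lt i; omega
  · exact .inl ⟨hlt, by rw [hmod, Nat.mod_eq_of_lt hlt]⟩
  · exact .inr ⟨heq, by rw [← ZMod.val_eq_zero, hmod, heq, Nat.mod_self]⟩

lemma Finset.card_filter_eq_card_filter_univ_iff {α : Type*} [Fintype α] (U : Finset α)
    (p : α → Prop) [DecidablePred p] : #{a ∈ U | p a} = #{a | p a} ↔ ∀ a, p a → a ∈ U := by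
  have hsub : U.filter p ⊆ univ.filter p := filter_subset_filter p (subset_univ U)
  constructor
  · intro h a ha
    have := eq_of_subset_of_card_le hsub h.ge ▸ mem_filter.mpr ⟨mem_univ a, ha⟩
    exact (mem_filter.mp this).1
  · intro h
    congr 1
    ext a
    simpa using h a

def Equiv.rotateTo {n : ℕ} {α : Type*} (f : ZMod n ≃ α) (a : α) : ZMod n ≃ α :=
  (Equiv.addRight (f.symm a)).trans f

namespace Equiv

variable {n : ℕ} {α : Type*} (f : ZMod n ≃ α) (a : α)

lemma rotateTo_apply (i : ZMod n) : f.rotateTo a i = f (i + f.symm a) := rfl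

lemma rotateTo_zero : f.rotateTo a 0 = a := by
  rw [rotateTo_apply, zero_add, Equiv.apply_symm_apply]

lemma rotateTo_rotateTo : (f.rotateTo a).rotateTo (f 0) = f := by
  have hpos : (f.rotateTo a).symm (f 0) = -f.symm a := by
    rw [Equiv.symm_apply_eq, rotateTo_apply, neg_add_cancel]
  ext i
  rw [rotateTo_apply, rotateTo_apply, hpos, neg_add_cancel_right]

end Equiv

namespace Multidigraph

variable {D : Multidigraph}

lemma outdeg_eq_card (v : D.V) : D.outdeg v = #{e | D.src e = v} := by
  rw [outdeg, ← Set.ncard_coe_finset, coe_filter]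
  simp

lemma indeg_eq_card (v : D.V) : D.indeg v = #{e | D.tgt e = v} := by
  rw [indeg, ← Set.ncard_coe_finset, coe_filter]
  simp

lemma exists_src_eq_of_outdeg_pos {v : D.V} (h : 0 < D.outdeg v) : ∃ e, D.src e = v := by
  rw [outdeg_eq_card, card_pos] at h
  obtain ⟨e, he⟩ := h
  exact ⟨e, (mem_filter.mp he).2⟩

lemma eq_or_eq_of_outdeg_le_two {v : D.V} (h : D.outdeg v ≤ 2) {a b c : D.E}
    (ha : D.src a = v) (hb : D.src b = v) (hc : D.src c = v) (hab : a ≠ b) : c = a ∨ c = b := by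
  by_contra! hne
  have hsub : ({a, b, c} : Set D.E) ⊆ {e | D.src e = v} := by
    rintro e (rfl | rfl | rfl) <;> assumption
  have := Set.ncard_le_ncard hsub
  rw [Set.ncard_eq_three.mpr ⟨a, b, c, hab, hne.1.symm, hne.2.symm, rfl⟩] at this
  exact absurd (this.trans h) (by norm_num)

lemma IsEulerCircuitFrom.rotateTo {e : D.E} {f : ZMod (Fintype.card D.E) ≃ D.E}
    (hf : D.IsEulerCircuitFrom e f) (e' : D.E) : D.IsEulerCircuitFrom e' (f.rotateTo e') := by
  refine ⟨Equiv.rotateTo_zero f e', fun i => ?_⟩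
  rw [Equiv.rotateTo_apply, Equiv.rotateTo_apply, add_right_comm]
  exact hf.2 _

lemma eulerCount_eq_eulerCount (e e' : D.E) : D.eulerCount e = D.eulerCount e' :=
  Set.ncard_congr (fun f _ => f.rotateTo e') (fun _ hf => hf.rotateTo e')
    (fun f f' hf hf' h => by
      rw [← Equiv.rotateTo_rotateTo f e', h, hf.1, ← hf'.1, Equiv.rotateTo_rotateTo])
    (fun f' hf' => ⟨f'.rotateTo e, hf'.rotateTo e, by
      rw [← hf'.1, Equiv.rotateTo_rotateTo]⟩)

/-- The out-edge of each vertex `≠ r` that `g` traverses last, positions counted from `g 0`. -/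
def lastExits (g : ZMod (Fintype.card D.E) ≃ D.E) (r : D.V) : Set D.E :=
  {e | D.src e ≠ r ∧ ∀ e', D.src e' = D.src e → (g.symm e').val ≤ (g.symm e).val}

section lastExits

variable {g : ZMod (Fintype.card D.E) ≃ D.E} {r : D.V}

lemma eq_of_mem_lastExits {e e' : D.E} (he : e ∈ D.lastExits g r) (he' : e' ∈ D.lastExits g r)
    (h : D.src e = D.src e') : e = e' := by
  have : Nonempty D.E := ⟨e⟩
  have hpos := ZMod.val_injective _ (le_antisymm (he'.2 e h) (he.2 e' h.symm))
  exact g.symm.injective hpos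

lemma exists_mem_lastExits {v : D.V} (hv : v ≠ r) {e : D.E} (he : D.src e = v) :
    ∃ t ∈ D.lastExits g r, D.src t = v := by
  obtain ⟨t, ht, hmax⟩ := exists_max_image {e | D.src e = v} (fun e => (g.symm e).val)
    ⟨e, by simpa using he⟩
  rw [mem_filter] at ht
  exact ⟨t, ⟨ht.2 ▸ hv, fun e' he' => hmax e' (by simpa [ht.2] using he')⟩, ht.2⟩

lemma reflTransGen_lastExits_tgt {x : D.E} (hg : D.IsEulerCircuitFrom x g)
    (hx : D.src x = r) (t : D.E) :
    Relation.ReflTransGen (D.step (D.lastExits g r)) (D.tgt t) r := by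
  have : Nonempty D.E := ⟨x⟩
  by_cases hw : D.tgt t = r
  · rw [hw]
  have hnext : D.src (g (g.symm t + 1)) = D.tgt t := by rw [← hg.2, Equiv.apply_symm_apply]
  obtain ⟨-, hval⟩ | ⟨-, hzero⟩ := ZMod.val_add_one_eq_or (g.symm t)
  · obtain ⟨t', ht', htw⟩ := D.exists_mem_lastExits hw hnext
    have hlater : (g.symm t).val < (g.symm t').val := by
      have := ht'.2 _ (hnext.trans htw.symm)
      rw [Equiv.symm_apply_apply, hval] at this
      omega
    exact .head ⟨t', ht', htw, rfl⟩ (reflTransGen_lastExits_tgt hg hx t')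
  · exact absurd (by rw [← hnext, hzero, hg.1, hx]) hw
termination_by Fintype.card D.E - (g.symm t).val
decreasing_by have := ZMod.val_lt (g.symm t'); omega

lemma isArborescence_lastExits (hsrc : ∀ v, ∃ e, D.src e = v) {x : D.E}
    (hg : D.IsEulerCircuitFrom x g) (hx : D.src x = r) : D.IsArborescence (D.lastExits g r) r := by
  refine ⟨fun v hv => ?_, fun e he => he.1, fun v => ?_⟩
  · obtain ⟨e, he⟩ := hsrc v
    obtain ⟨t, ht, htv⟩ := D.exists_mem_lastExits hv he
    exact ⟨t, ⟨ht, htv⟩, fun e' he' => D.eq_of_mem_lastExits he'.1 ht (he'.2.trans htv.symm)⟩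
  · by_cases hv : v = r
    · rw [hv]
    obtain ⟨e, he⟩ := hsrc v
    obtain ⟨t, ht, htv⟩ := D.exists_mem_lastExits hv he
    exact .head ⟨t, ht, htv, rfl⟩ (D.reflTransGen_lastExits_tgt hg hx t)

lemma apply_eq_of_mem_lastExits {g' : ZMod (Fintype.card D.E) ≃ D.E} {i : ZMod (Fintype.card D.E)}
    (hagree : ∀ j : ZMod (Fintype.card D.E), j.val < i.val → g j = g' j)
    (hi : g i ∈ D.lastExits g r) (hsrc : D.src (g' i) = D.src (g i)) : g' i = g i := by
  have : Nonempty D.E := ⟨g i⟩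
  have hle : (g.symm (g' i)).val ≤ i.val := by simpa using hi.2 (g' i) hsrc
  rcases hle.lt_or_eq with hlt | heq
  · have := hagree _ hlt
    rw [Equiv.apply_symm_apply] at this
    exact absurd (congrArg ZMod.val (g'.injective this)) hlt.ne'
  · exact (Equiv.symm_apply_eq g).mp (ZMod.val_injective _ heq)

lemma eq_of_lastExits_eq (hout : ∀ v, D.outdeg v ≤ 2) {x : D.E}
    {g' : ZMod (Fintype.card D.E) ≃ D.E} (hg : D.IsEulerCircuitFrom x g)
    (hg' : D.IsEulerCircuitFrom x g') (hx : D.src x = r)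
    (hT : D.lastExits g r = D.lastExits g' r) : g = g' := by
  have : Nonempty D.E := ⟨x⟩
  suffices ∀ k i, ZMod.val i = k → g i = g' i from Equiv.ext fun i => this _ i rfl
  intro k
  induction k using Nat.strong_induction_on with | _ k ih => ?_
  rintro i rfl
  have hagree : ∀ j : ZMod (Fintype.card D.E), j.val < i.val → g j = g' j :=
    fun j hj => ih _ hj j rfl
  by_cases hi0 : i = 0
  · rw [hi0, hg.1, hg'.1]
  obtain ⟨p, rfl⟩ : ∃ p, p + 1 = i := ⟨i - 1, sub_add_cancel i 1⟩
  have hp : p.val < (p + 1).val := by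
    rcases ZMod.val_add_one_eq_or p with ⟨-, h⟩ | ⟨-, h⟩
    · omega
    · exact absurd h hi0
  have hsrc : D.src (g' (p + 1)) = D.src (g (p + 1)) := by rw [← hg.2, ← hg'.2, hagree p hp]
  by_contra hne
  by_cases hv : D.src (g (p + 1)) = r
  · -- `x` would be a third out-edge of `r`
    have hx₁ : x ≠ g (p + 1) := fun h => hi0 (g.injective (h ▸ hg.1)).symm
    have hx₂ : x ≠ g' (p + 1) := fun h => hi0 (g'.injective (h ▸ hg'.1)).symm
    rcases D.eq_or_eq_of_outdeg_le_two (hout r) hv (hsrc.trans hv) hx hne with h | h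
    · exact hx₁ h
    · exact hx₂ h
  obtain ⟨t, ht, htv⟩ := D.exists_mem_lastExits hv rfl
  rcases D.eq_or_eq_of_outdeg_le_two (hout _) rfl hsrc htv hne with h | h
  · exact hne (apply_eq_of_mem_lastExits hagree (h ▸ ht) hsrc).symm
  · exact hne (apply_eq_of_mem_lastExits (fun j hj => (hagree j hj).symm) (h ▸ hT ▸ ht)
      hsrc.symm)

end lastExits

def IsGreedyStep (T : Set D.E) (v : D.V) (U : Finset D.E) (e : D.E) : Prop :=
  D.src e = v ∧ e ∉ U ∧ (e ∈ T → ∀ e', D.src e' = v → e' ∉ U → e' = e)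

lemma exists_isGreedyStep {T : Set D.E} {r : D.V} (hT : D.IsArborescence T r) {v : D.V}
    {U : Finset D.E} (h : ∃ e, D.src e = v ∧ e ∉ U) : ∃ e, D.IsGreedyStep T v U e := by
  by_cases hnT : ∃ e, D.src e = v ∧ e ∉ U ∧ e ∉ T
  · obtain ⟨e, hv, hU, heT⟩ := hnT
    exact ⟨e, hv, hU, fun he => absurd he heT⟩
  push Not at hnT
  obtain ⟨e, hv, hU⟩ := h
  refine ⟨e, hv, hU, fun he e' he' hU' => ?_⟩
  exact (hT.1 v (hv ▸ hT.2.1 e he)).unique ⟨hnT e' he' hU', he'⟩ ⟨he, hv⟩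

open Classical in
/-- The current edge and the set of edges used so far; once no greedy step exists the walk repeats
its edge, a junk value never used. -/
noncomputable def greedyTrail (T : Set D.E) (x : D.E) : ℕ → D.E × Finset D.E
  | 0 => (x, {x})
  | k + 1 =>
    let p := greedyTrail T x k
    let e := if h : ∃ e, D.IsGreedyStep T (D.tgt p.1) p.2 e then h.choose else p.1
    (e, insert e p.2)

noncomputable def greedyWalk (T : Set D.E) (x : D.E) (k : ℕ) : D.E := (D.greedyTrail T x k).1

noncomputable def greedyUsed (T : Set D.E) (x : D.E) (k : ℕ) : Finset D.E :=
  (D.greedyTrail T x k).2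

def IsGreedyUpTo (T : Set D.E) (x : D.E) (k : ℕ) : Prop :=
  ∀ j < k, D.IsGreedyStep T (D.tgt (D.greedyWalk T x j)) (D.greedyUsed T x j)
    (D.greedyWalk T x (j + 1))

section greedy

variable {T : Set D.E} {x : D.E} {r : D.V} {k : ℕ}

lemma greedyWalk_zero : D.greedyWalk T x 0 = x := rfl

lemma greedyUsed_succ (k : ℕ) :
    D.greedyUsed T x (k + 1) = insert (D.greedyWalk T x (k + 1)) (D.greedyUsed T x k) := rfl

lemma isGreedyStep_greedyWalk_succ
    (h : ∃ e, D.IsGreedyStep T (D.tgt (D.greedyWalk T x k)) (D.greedyUsed T x k) e) :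
    D.IsGreedyStep T (D.tgt (D.greedyWalk T x k)) (D.greedyUsed T x k)
      (D.greedyWalk T x (k + 1)) := by
  unfold greedyWalk greedyUsed at *
  simp only [greedyTrail]
  rw [dif_pos h]
  exact h.choose_spec

lemma mem_greedyUsed {e : D.E} : e ∈ D.greedyUsed T x k ↔ ∃ j ≤ k, D.greedyWalk T x j = e := by
  induction k with
  | zero => simp [greedyUsed, greedyTrail, greedyWalk, eq_comm]
  | succ k ih =>
    rw [greedyUsed_succ, mem_insert, ih]
    constructor
    · rintro (rfl | ⟨j, hj, rfl⟩)
      exacts [⟨k + 1, le_rfl, rfl⟩, ⟨j, hj.trans k.le_succ, rfl⟩]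
    · rintro ⟨j, hj, rfl⟩
      rcases Nat.le_succ_iff.mp hj with hj | rfl
      exacts [.inr ⟨j, hj, rfl⟩, .inl rfl]

lemma greedyUsed_mono {j : ℕ} (h : j ≤ k) : D.greedyUsed T x j ⊆ D.greedyUsed T x k := by
  intro e he
  obtain ⟨i, hi, rfl⟩ := mem_greedyUsed.mp he
  exact mem_greedyUsed.mpr ⟨i, hi.trans h, rfl⟩

lemma IsGreedyUpTo.mono {j : ℕ} (hk : D.IsGreedyUpTo T x k) (h : j ≤ k) : D.IsGreedyUpTo T x j :=
  fun i hi => hk i (hi.trans_le h)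

lemma IsGreedyUpTo.injOn (hk : D.IsGreedyUpTo T x k) :
    Set.InjOn (D.greedyWalk T x) (Set.Iic k) := by
  suffices ∀ i j, j ≤ k → i < j → D.greedyWalk T x i ≠ D.greedyWalk T x j by
    intro i hi j hj he
    by_contra hne
    rcases Nat.lt_or_gt_of_ne hne with h | h
    exacts [this i j hj h he, this j i hi h he.symm]
  rintro i (_ | j) hj hij he
  · omega
  exact (hk j hj).2.1 (he ▸ mem_greedyUsed.mpr ⟨i, by omega, rfl⟩)

lemma IsGreedyUpTo.card_greedyUsed (hk : D.IsGreedyUpTo T x k) :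
    #(D.greedyUsed T x k) = k + 1 := by
  induction k with
  | zero => rfl
  | succ k ih =>
    rw [greedyUsed_succ, card_insert_of_notMem (hk k k.lt_succ_self).2.1,
      ih (hk.mono k.le_succ)]

/-- Flow conservation along the walk, which runs from `r` to the head of its last edge. -/
lemma IsGreedyUpTo.card_src_add_eq (hx : D.src x = r) (hk : D.IsGreedyUpTo T x k) (z : D.V) :
    #{e ∈ D.greedyUsed T x k | D.src e = z} + (if D.tgt (D.greedyWalk T x k) = z then 1 else 0)
      = (if r = z then 1 else 0) + #{e ∈ D.greedyUsed T x k | D.tgt e = z} := by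
  induction k with
  | zero =>
    simp only [greedyUsed, greedyTrail, greedyWalk_zero, filter_singleton, hx]
    by_cases h₁ : r = z <;> by_cases h₂ : D.tgt x = z <;> simp [h₁, h₂]
  | succ k ih =>
    obtain ⟨hsrc, hnew, -⟩ := hk k k.lt_succ_self
    have := ih (hk.mono k.le_succ)
    rw [greedyUsed_succ, filter_insert, filter_insert, hsrc]
    split_ifs at this ⊢ <;> simp_all [card_insert_of_notMem] <;> omega

lemma IsGreedyUpTo.tgt_eq_of_stuck (hbal : D.Balanced) (hx : D.src x = r)
    (hk : D.IsGreedyUpTo T x k)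
    (hstuck : ∀ e, D.src e = D.tgt (D.greedyWalk T x k) → e ∈ D.greedyUsed T x k) :
    D.tgt (D.greedyWalk T x k) = r ∧ ∀ e, D.tgt e = r → e ∈ D.greedyUsed T x k := by
  set v := D.tgt (D.greedyWalk T x k)
  have hout : #{e ∈ D.greedyUsed T x k | D.src e = v} = D.outdeg v := by
    rw [outdeg_eq_card, card_filter_eq_card_filter_univ_iff]
    exact hstuck
  have hin : #{e ∈ D.greedyUsed T x k | D.tgt e = v} ≤ D.indeg v := by
    rw [indeg_eq_card]
    exact card_le_card (filter_subset_filter _ (subset_univ _))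
  have hflow := hk.card_src_add_eq hx v
  rw [if_pos rfl, hout, ← hbal v] at hflow
  have hrv : r = v := by
    by_contra h
    rw [if_neg h] at hflow
    omega
  rw [if_pos hrv] at hflow
  have hall : #{e ∈ D.greedyUsed T x k | D.tgt e = v} = #{e | D.tgt e = v} := by
    rw [← indeg_eq_card]
    omega
  rw [card_filter_eq_card_filter_univ_iff, ← hrv] at hall
  exact ⟨hrv.symm, hall⟩

lemma IsGreedyUpTo.forall_mem_greedyUsed_of_stuck (hT : D.IsArborescence T r)
    (hbal : D.Balanced) (hx : D.src x = r) (hk : D.IsGreedyUpTo T x k)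
    (hstuck : ∀ e, D.src e = D.tgt (D.greedyWalk T x k) → e ∈ D.greedyUsed T x k) (e : D.E) :
    e ∈ D.greedyUsed T x k := by
  set U := D.greedyUsed T x k
  obtain ⟨hend, hin_r⟩ := hk.tgt_eq_of_stuck hbal hx hstuck
  suffices ∀ z, Relation.ReflTransGen (D.step T) z r → ∀ e, D.src e = z → e ∈ U from
    this _ (hT.2.2 _) e rfl
  intro z hz
  induction hz using Relation.ReflTransGen.head_induction_on with
  | refl => exact hend ▸ hstuck
  | @head z c hstep _ ih =>
    intro e he
    by_contra heU
    obtain ⟨t, htT, htz, htc⟩ := hstep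
    have htU : t ∉ U := by
      intro htU
      obtain ⟨_ | m, hm, rfl⟩ := mem_greedyUsed.mp htU
      · exact hT.2.1 _ htT hx
      obtain ⟨hsrc, -, hlast⟩ := hk m hm
      have heU' : e ∉ D.greedyUsed T x m := fun h => heU (greedyUsed_mono (by omega) h)
      exact heU (hlast htT e (he.trans (htz.symm.trans hsrc)) heU' ▸ htU)
    by_cases hcr : c = r
    · exact htU (hin_r t (htc.trans hcr))
    have hflow := hk.card_src_add_eq hx c
    rw [if_neg (Ne.symm hcr), if_neg (hend ▸ Ne.symm hcr), add_zero, zero_add,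
      (card_filter_eq_card_filter_univ_iff _ _).mpr ih, ← outdeg_eq_card, ← hbal,
      indeg_eq_card, eq_comm, card_filter_eq_card_filter_univ_iff] at hflow
    exact htU (hflow t htc)

lemma isGreedyUpTo_of_lt (hT : D.IsArborescence T r) (hbal : D.Balanced) (hx : D.src x = r) :
    ∀ k < Fintype.card D.E, D.IsGreedyUpTo T x k := by
  intro k
  induction k with
  | zero => exact fun _ j hj => absurd hj j.not_lt_zero
  | succ k ih =>
    intro hlt
    have hk := ih (by omega)
    suffices ∃ e, D.IsGreedyStep T (D.tgt (D.greedyWalk T x k)) (D.greedyUsed T x k) e by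
      intro j hj
      rcases Nat.lt_succ_iff_lt_or_eq.mp hj with hj | rfl
      exacts [hk j hj, isGreedyStep_greedyWalk_succ this]
    refine D.exists_isGreedyStep hT ?_
    by_contra! hstuck
    have hall := hk.forall_mem_greedyUsed_of_stuck hT hbal hx hstuck
    have := card_le_card (fun e _ => hall e : (univ : Finset D.E) ⊆ D.greedyUsed T x k)
    rw [card_univ, hk.card_greedyUsed] at this
    omega

lemma exists_isEulerCircuitFrom_greedyWalk (hT : D.IsArborescence T r) (hbal : D.Balanced)
    (hx : D.src x = r) :
    ∃ g, D.IsEulerCircuitFrom x g ∧ ∀ i : ZMod (Fintype.card D.E), g i = D.greedyWalk T x i.val := by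
  have : Nonempty D.E := ⟨x⟩
  set n := Fintype.card D.E
  have hk := isGreedyUpTo_of_lt hT hbal hx (n - 1) (by have := Fintype.card_pos (α := D.E); omega)
  have hall : D.greedyUsed T x (n - 1) = univ := by
    apply eq_univ_of_card
    rw [hk.card_greedyUsed]
    have := Fintype.card_pos (α := D.E)
    omega
  have hend := (hk.tgt_eq_of_stuck hbal hx fun e _ => hall ▸ mem_univ e).1
  have hinj : Function.Injective fun i : ZMod n => D.greedyWalk T x i.val := by
    intro i j h
    have := ZMod.val_lt i
    have := ZMod.val_lt j
    exact ZMod.val_injective n (hk.injOn (by simp; omega) (by simp; omega) h)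
  have hbij := (Fintype.bijective_iff_injective_and_card _).mpr ⟨hinj, ZMod.card n⟩
  refine ⟨Equiv.ofBijective _ hbij, ⟨by simp [greedyWalk_zero], fun i => ?_⟩, fun i => rfl⟩
  simp only [Equiv.ofBijective_apply]
  rcases ZMod.val_add_one_eq_or i with ⟨hlt, hval⟩ | ⟨hval, hzero⟩
  · rw [hval]
    exact (hk i.val (by omega)).1.symm
  · rw [hzero, ZMod.val_zero, greedyWalk_zero, hx, ← hend]
    congr
    omega

lemma exists_lastExits_eq (hT : D.IsArborescence T r) (hbal : D.Balanced) (hx : D.src x = r) :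
    ∃ g, D.IsEulerCircuitFrom x g ∧ D.lastExits g r = T := by
  have : Nonempty D.E := ⟨x⟩
  obtain ⟨g, hg, hgw⟩ := D.exists_isEulerCircuitFrom_greedyWalk hT hbal hx
  have hk := isGreedyUpTo_of_lt hT hbal hx
  have hpos : ∀ j < Fintype.card D.E, (g.symm (D.greedyWalk T x j)).val = j := by
    intro j hj
    rw [← ZMod.val_cast_of_lt hj, ← hgw, Equiv.symm_apply_apply]
  have hT_sub : T ⊆ D.lastExits g r := by
    intro t ht
    obtain ⟨_ | m, hm, rfl⟩ : ∃ j < Fintype.card D.E, D.greedyWalk T x j = t := by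
      refine ⟨(g.symm t).val, ZMod.val_lt _, ?_⟩
      rw [← hgw, Equiv.apply_symm_apply]
    · exact absurd hx (hT.2.1 _ ht)
    obtain ⟨hsrc, -, hlast⟩ := hk (m + 1) hm m m.lt_succ_self
    refine ⟨hT.2.1 _ ht, fun e he => ?_⟩
    by_cases heU : e ∈ D.greedyUsed T x m
    · obtain ⟨j, hj, rfl⟩ := mem_greedyUsed.mp heU
      rw [hpos j (by omega), hpos (m + 1) hm]
      omega
    · rw [hlast ht e (he.trans hsrc) heU]
  refine ⟨g, hg, subset_antisymm (fun e he => ?_) hT_sub⟩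
  obtain ⟨t, ⟨htT, hte⟩, -⟩ := hT.1 _ he.1
  exact D.eq_of_mem_lastExits he (hT_sub htT) hte.symm ▸ htT

end greedy

end Multidigraph

theorem euler_circuits_eq_arborescences_general (D : Multidigraph)
    (hbal : D.Balanced)
    (hout : ∀ v, D.outdeg v = 2)
    (e₀ : D.E) (r : D.V) :
    D.eulerCount e₀ = D.arbCount r := by
  have hsrc : ∀ v, ∃ e, D.src e = v := fun v =>
    D.exists_src_eq_of_outdeg_pos (by rw [hout v]; norm_num)
  obtain ⟨x, hx⟩ := hsrc r
  rw [D.eulerCount_eq_eulerCount e₀ x]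
  exact Set.ncard_congr (fun g _ => D.lastExits g r)
    (fun _ hg => D.isArborescence_lastExits hsrc hg hx)
    (fun _ _ hg hg' h => D.eq_of_lastExits_eq (fun v => (hout v).le) hg hg' hx h)
    (fun _ hT => by
      obtain ⟨g, hg, hgT⟩ := D.exists_lastExits_eq hT hbal hx
      exact ⟨g, hg, hgT⟩)

/-- In a balanced (Eulerian) connected directed multigraph in
which every vertex has out-degree `2`, the number of Eulerian circuits starting
from a fixed edge equals the number of spanning arborescences rooted at any
fixed vertex `r`. -/
theorem euler_circuits_eq_arborescences (D : Multidigraph)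
    (hconn : D.Connected) (hbal : D.Balanced)
    (hout : ∀ v, D.outdeg v = 2)
    (e₀ : D.E) (r : D.V) :
    D.eulerCount e₀ = D.arbCount r :=
  euler_circuits_eq_arborescences_general D hbal hout e₀ r
end

section
/- For a connected Eulerian directed multigraph D, the number of spanning arborescences rooted at r is the same for every choice of root vertex r. -/
open Finset Matrix

namespace Matrix

variable {n R : Type*} [Fintype n] [DecidableEq n] [CommRing R]

open Polynomial in
theorem det_one_sub_of_isNilpotent [IsDomain R] {N : Matrix n n R} (hN : IsNilpotent N) :
    (1 - N).det = 1 := by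
  have hchar : N.charpoly = X ^ Fintype.card n :=
    sub_eq_zero.mp (isNilpotent_charpoly_sub_pow_of_isNilpotent hN).eq_zero
  simpa [hchar] using (eval_charpoly N 1).symm

theorem det_updateRow_single_eq_det_submatrix (A : Matrix n n R) (r : n) :
    (A.updateRow r (Pi.single r 1)).det =
      (A.submatrix (Subtype.val : {i // i ≠ r} → n) Subtype.val).det := by
  rw [twoBlockTriangular_det _ (· ≠ r) fun i hi j hj => by simp_all]
  have hroot : toSquareBlockProp (A.updateRow r (Pi.single r 1)) (fun i => ¬i ≠ r) = 1 := by
    ext ⟨i, hi⟩ ⟨j, hj⟩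
    obtain rfl : i = r := not_not.mp hi
    obtain rfl : j = i := not_not.mp hj
    simp [toSquareBlockProp, toBlock]
  rw [hroot, det_one, mul_one]
  congr 1
  ext ⟨i, hi⟩ ⟨j, hj⟩
  simp [toSquareBlockProp, toBlock, hi]

/-- With zero column sums, adding all other rows to row `j` of `A.updateRow i y` turns it into
`-A i`; the result is `A.updateRow j y` with rows `i`, `j` swapped and one row negated. -/
theorem det_updateRow_eq_of_col_sum_eq_zero (A : Matrix n n R) (hA : ∀ j, ∑ i, A i j = 0)
    (y : n → R) (i j : n) : (A.updateRow i y).det = (A.updateRow j y).det := by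
  rcases eq_or_ne i j with rfl | hij
  · rfl
  set P := A.updateRow i y
  have hrow : ∑ k, (if k = i then 0 else 1 : R) • P k = -A i := by
    ext l
    simp only [Finset.sum_apply, Pi.smul_apply, Pi.neg_apply, smul_eq_mul, ite_mul, zero_mul,
      one_mul, Finset.sum_ite, Finset.sum_const_zero, zero_add]
    rw [eq_neg_iff_add_eq_zero, ← hA l, ← Finset.add_sum_erase _ _ (mem_univ i), add_comm]
    congr 1
    refine Finset.sum_congr (by ext; simp) fun k hk => ?_
    simp_all [P]
  have hswap : P.updateRow j (A i) = (A.updateRow j y).submatrix (Equiv.swap i j) id := by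
    ext k l
    rcases eq_or_ne k j with rfl | hkj
    · simp [P, hij]
    rcases eq_or_ne k i with rfl | hki
    · simp [P, hij]
    · simp [P, hkj, hki, Equiv.swap_apply_of_ne_of_ne]
  calc P.det = (P.updateRow j (-A i)).det := by
        rw [← hrow, det_updateRow_sum, if_neg hij.symm, one_smul]
    _ = (A.updateRow j y).det := by
        rw [← neg_one_smul R (A i), det_updateRow_smul, hswap, det_permute,
          Equiv.Perm.sign_swap hij]
        simp

theorem adjugate_apply_eq_of_col_sum_eq_zero (A : Matrix n n R) (hA : ∀ j, ∑ i, A i j = 0)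
    (i j j' : n) : adjugate A i j = adjugate A i j' := by
  simp only [adjugate_apply, det_updateRow_eq_of_col_sum_eq_zero A hA _ j j']

theorem adjugate_apply_eq_of_row_sum_eq_zero (A : Matrix n n R) (hA : ∀ i, ∑ j, A i j = 0)
    (i i' j : n) : adjugate A i j = adjugate A i' j := by
  rw [← transpose_apply (adjugate A), adjugate_transpose,
    adjugate_apply_eq_of_col_sum_eq_zero Aᵀ hA j i i', ← adjugate_transpose, transpose_apply]

end Matrix

theorem Relation.reflTransGen_iff_exists_iterate {α : Type*} {R : α → α → Prop} {g : α → α}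
    {r : α} (hR : ∀ u w, R u w ↔ u ≠ r ∧ g u = w) (v : α) :
    ReflTransGen R v r ↔ ∃ k, g^[k] v = r := by
  constructor
  · intro h
    induction h using ReflTransGen.head_induction_on with
    | refl => exact ⟨0, rfl⟩
    | head hstep _ ih =>
      obtain ⟨k, hk⟩ := ih
      exact ⟨k + 1, by rw [Function.iterate_succ_apply, ((hR _ _).1 hstep).2, hk]⟩
  · rintro ⟨k, hk⟩
    induction k generalizing v with
    | zero => exact hk ▸ ReflTransGen.refl
    | succ k ih =>
      by_cases hv : v = r
      · exact hv ▸ ReflTransGen.refl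
      · exact .head ((hR v (g v)).2 ⟨hv, rfl⟩) (ih _ hk)

section FunctionalGraph

variable {V : Type*} [Fintype V] [DecidableEq V] (g : V → V) (r : V)

def succMatrix : Matrix {v // v ≠ r} {v // v ≠ r} ℤ := of fun u w => if g u = w then 1 else 0

variable {g r}

theorem succMatrix_mulVec_apply (c : {v // v ≠ r} → ℤ) (u : {v // v ≠ r}) :
    (succMatrix g r *ᵥ c) u = if h : g u = r then 0 else c ⟨g u, h⟩ := by
  simp only [mulVec, dotProduct, succMatrix, of_apply, ite_mul, one_mul, zero_mul]
  split_ifs with h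
  · exact Finset.sum_eq_zero fun x _ => if_neg fun hx : g u = x => x.2 (hx ▸ h)
  · rw [Fintype.sum_eq_single ⟨g u, h⟩ fun x hx => if_neg fun hx' => hx (Subtype.ext hx'.symm),
      if_pos rfl]

theorem succMatrix_mul_apply (M : Matrix {v // v ≠ r} {v // v ≠ r} ℤ) (u w : {v // v ≠ r}) :
    (succMatrix g r * M) u w = if h : g u = r then 0 else M ⟨g u, h⟩ w :=
  succMatrix_mulVec_apply (fun x => M x w) u

theorem succMatrix_pow_apply (hr : g r = r) (k : ℕ) (u w : {v // v ≠ r}) :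
    (succMatrix g r ^ k) u w = if g^[k] u = w then 1 else 0 := by
  induction k generalizing u with
  | zero => rw [pow_zero, one_apply]; exact if_congr Subtype.ext_iff rfl rfl
  | succ k ih =>
    rw [pow_succ', succMatrix_mul_apply, Function.iterate_succ_apply]
    split_ifs with h hk hk
    · rw [h, Function.iterate_fixed hr] at hk
      exact absurd hk.symm w.2
    · rfl
    · rw [ih, if_pos hk]
    · rw [ih, if_neg hk]

theorem det_one_sub_succMatrix_of_forall_reaches (hr : g r = r)
    (h : ∀ v, ∃ k, g^[k] v = r) : (1 - succMatrix g r).det = 1 := by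
  choose k hk using h
  have hK : ∀ v, g^[∑ x, k x] v = r := fun v => by
    rw [← Nat.sub_add_cancel (single_le_sum (fun x _ => Nat.zero_le (k x)) (mem_univ v)),
      Function.iterate_add_apply, hk, Function.iterate_fixed hr]
  refine det_one_sub_of_isNilpotent ⟨∑ x, k x, ?_⟩
  ext u w
  rw [succMatrix_pow_apply hr, hK, if_neg w.2.symm, Matrix.zero_apply]

/-- The indicator of the vertices that never reach `r` is a kernel vector: a vertex `u ≠ r`
never reaches `r` exactly when `g u` does not. -/
theorem det_one_sub_succMatrix_of_exists_not_reaches (h : ∃ v, ∀ k, g^[k] v ≠ r) :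
    (1 - succMatrix g r).det = 0 := by
  classical
  obtain ⟨v, hv⟩ := h
  let c : {v // v ≠ r} → ℤ := fun u => if ∀ k, g^[k] u ≠ r then 1 else 0
  refine exists_mulVec_eq_zero_iff.mp ⟨c, fun hc => ?_, ?_⟩
  · simpa [c, hv] using congrFun hc ⟨v, hv 0⟩
  ext u
  rw [sub_mulVec, one_mulVec, Pi.sub_apply, succMatrix_mulVec_apply, Pi.zero_apply, sub_eq_zero]
  have hiff : (∀ k, g^[k] u ≠ r) ↔ ∀ k, g^[k] (g u) ≠ r :=
    ⟨fun h k => h (k + 1), fun h k => k.casesOn u.2 h⟩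
  split_ifs with hgu
  · simpa [c, hiff] using ⟨0, hgu⟩
  · simp [c, hiff]

end FunctionalGraph

namespace Multidigraph

variable (D : Multidigraph)

def outEdges (v : D.V) : Finset D.E := {e | D.src e = v}

/-- The out-degree Laplacian `D_out - A`, assembled from one row `𝟙_u - 𝟙_{tgt e}` per edge. -/
def laplacian : Matrix D.V D.V ℤ :=
  fun u => ∑ e ∈ D.outEdges u, (Pi.single u 1 - Pi.single (D.tgt e) 1)

theorem laplacian_apply (u w : D.V) :
    D.laplacian u w =
      ∑ e ∈ D.outEdges u, ((if w = u then 1 else 0) - if w = D.tgt e then 1 else 0) := by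
  simp [laplacian, Finset.sum_apply, Pi.single_apply]

theorem laplacian_row_sum (u : D.V) : ∑ w, D.laplacian u w = 0 := by
  simp only [laplacian_apply]
  rw [Finset.sum_comm]
  simp [Finset.sum_sub_distrib]

theorem laplacian_col_sum (hbal : D.Balanced) (w : D.V) : ∑ u, D.laplacian u w = 0 := by
  have hsum : ∑ u, D.laplacian u w =
      ∑ e, ((if w = D.src e then 1 else 0) - if w = D.tgt e then 1 else 0 : ℤ) := by
    simp only [laplacian_apply]
    rw [← Finset.sum_fiberwise Finset.univ D.src]
    refine Finset.sum_congr rfl fun u _ => Finset.sum_congr rfl fun e he => ?_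
    simp only [Finset.mem_filter] at he
    rw [he.2]
  have hbal' := hbal w
  simp only [indeg, outdeg, Set.ncard_eq_toFinset_card', Set.toFinset_ofPred] at hbal'
  rw [hsum, Finset.sum_sub_distrib]
  simp [Finset.sum_boole, eq_comm (a := w), hbal']

variable {D} (r : D.V)

/-- The successor map of a choice of one out-edge at every vertex other than `r`. -/
def succOf (f : {v // v ≠ r} → D.E) (v : D.V) : D.V :=
  if h : v = r then r else D.tgt (f ⟨v, h⟩)

theorem succOf_self (f : {v // v ≠ r} → D.E) : D.succOf r f r = r := dif_pos rfl

theorem succOf_of_ne (f : {v // v ≠ r} → D.E) {v : D.V} (h : v ≠ r) :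
    D.succOf r f v = D.tgt (f ⟨v, h⟩) := dif_neg h

theorem det_laplacian_submatrix :
    (D.laplacian.submatrix (Subtype.val : {v // v ≠ r} → D.V) Subtype.val).det =
      ∑ f ∈ Fintype.piFinset fun u : {v // v ≠ r} => D.outEdges u,
        (1 - succMatrix (D.succOf r f) r).det := by
  have hrows : D.laplacian.submatrix (Subtype.val : {v // v ≠ r} → D.V) Subtype.val =
      fun u : {v // v ≠ r} => ∑ e ∈ D.outEdges u,
        fun w : {v // v ≠ r} => (Pi.single u.val 1 - Pi.single (D.tgt e) 1 : D.V → ℤ) w := by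
    ext u w
    simp [laplacian, Finset.sum_apply]
  rw [hrows]
  refine (detRowAlternating.toMultilinearMap.map_sum_finset _ _).trans
    (Finset.sum_congr rfl fun f _ => congrArg det ?_)
  ext u w
  simp [succMatrix, succOf_of_ne r f u.2, one_apply, Pi.single_apply, Subtype.ext_iff, eq_comm]

section Arborescence

variable {r} {f : {v // v ≠ r} → D.E}

theorem step_range_iff (hf : ∀ u, D.src (f u) = u) (u w : D.V) :
    D.step (Set.range f) u w ↔ u ≠ r ∧ D.succOf r f u = w := by
  constructor
  · rintro ⟨_, ⟨x, rfl⟩, rfl, rfl⟩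
    rw [hf]
    exact ⟨x.2, succOf_of_ne r f x.2⟩
  · rintro ⟨hu, rfl⟩
    exact ⟨f ⟨u, hu⟩, Set.mem_range_self _, hf _, (succOf_of_ne r f hu).symm⟩

theorem isArborescence_range_iff (hf : ∀ u, D.src (f u) = u) :
    D.IsArborescence (Set.range f) r ↔ ∀ v, ∃ k, (D.succOf r f)^[k] v = r := by
  have hunique : ∀ v, v ≠ r → ∃! e, e ∈ Set.range f ∧ D.src e = v := by
    refine fun v hv => ⟨f ⟨v, hv⟩, ⟨Set.mem_range_self _, hf _⟩, ?_⟩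
    rintro _ ⟨⟨u, rfl⟩, hu⟩
    rw [hf] at hu
    subst hu
    rfl
  have hsrc : ∀ e ∈ Set.range f, D.src e ≠ r := by
    rintro _ ⟨u, rfl⟩
    rw [hf]
    exact u.2
  have hreach := Relation.reflTransGen_iff_exists_iterate (step_range_iff hf)
  exact ⟨fun h v => (hreach v).1 (h.2.2 v), fun h => ⟨hunique, hsrc, fun v => (hreach v).2 (h v)⟩⟩

theorem exists_eq_range_of_isArborescence {T : Set D.E} (hT : D.IsArborescence T r) :
    ∃ f : {v // v ≠ r} → D.E, (∀ u, D.src (f u) = u) ∧ T = Set.range f := by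
  choose f hf huniq using fun u : {v // v ≠ r} => hT.1 u u.2
  refine ⟨f, fun u => (hf u).2, Set.ext fun e => ⟨fun he => ?_, ?_⟩⟩
  · exact ⟨⟨D.src e, hT.2.1 e he⟩, (huniq _ e ⟨he, rfl⟩).symm⟩
  · rintro ⟨u, rfl⟩
    exact (hf u).1

theorem eq_of_range_eq {f' : {v // v ≠ r} → D.E} (hf : ∀ u, D.src (f u) = u)
    (hf' : ∀ u, D.src (f' u) = u) (h : Set.range f = Set.range f') : f = f' := by
  funext u
  obtain ⟨u', hu'⟩ : f u ∈ Set.range f' := h ▸ Set.mem_range_self u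
  obtain rfl : u' = u := Subtype.ext (by rw [← hf' u', hu', hf u])
  exact hu'.symm

end Arborescence

open scoped Classical in
theorem arbCount_eq_card :
    D.arbCount r = #{f ∈ Fintype.piFinset fun u : {v // v ≠ r} => D.outEdges u |
      ∀ v, ∃ k, (D.succOf r f)^[k] v = r} := by
  have hvalid : ∀ f ∈ Fintype.piFinset (fun u : {v // v ≠ r} => D.outEdges u),
      ∀ u, D.src (f u) = u := fun f hf u => by
    simpa [outEdges] using Fintype.mem_piFinset.mp hf u
  have himage : {T | D.IsArborescence T r} = Set.range '' (↑({f ∈ Fintype.piFinset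
      (fun u : {v // v ≠ r} => D.outEdges u) | ∀ v, ∃ k, (D.succOf r f)^[k] v = r} :
        Finset _) : Set ({v // v ≠ r} → D.E)) := by
    ext T
    constructor
    · intro hT
      obtain ⟨f, hf, rfl⟩ := exists_eq_range_of_isArborescence hT
      exact ⟨f, by simpa [outEdges, hf] using (isArborescence_range_iff hf).1 hT, rfl⟩
    · rintro ⟨f, hf, rfl⟩
      rw [Finset.mem_coe, Finset.mem_filter] at hf
      exact (isArborescence_range_iff (hvalid f hf.1)).2 hf.2
  rw [arbCount, himage, Set.InjOn.ncard_image, Set.ncard_coe_finset]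
  intro f hf f' hf' h
  exact eq_of_range_eq (hvalid f (Finset.mem_filter.mp hf).1)
    (hvalid f' (Finset.mem_filter.mp hf').1) h

/-- The matrix-tree theorem for the out-degree Laplacian. -/
theorem arbCount_eq_adjugate_laplacian :
    (D.arbCount r : ℤ) = adjugate D.laplacian r r := by
  classical
  rw [adjugate_apply, det_updateRow_single_eq_det_submatrix, det_laplacian_submatrix,
    arbCount_eq_card, Finset.card_filter, Nat.cast_sum]
  refine Finset.sum_congr rfl fun f _ => ?_
  by_cases h : ∀ v, ∃ k, (D.succOf r f)^[k] v = r
  · rw [if_pos h, det_one_sub_succMatrix_of_forall_reaches (succOf_self r f) h, Nat.cast_one]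
  · rw [if_neg h, det_one_sub_succMatrix_of_exists_not_reaches (by push Not at h; exact h),
      Nat.cast_zero]

end Multidigraph

theorem arborescence_count_root_independent_general (D : Multidigraph)
    (hbal : D.Balanced) (r r' : D.V) :
    D.arbCount r = D.arbCount r' := by
  have h : (D.arbCount r : ℤ) = D.arbCount r' := by
    rw [D.arbCount_eq_adjugate_laplacian, D.arbCount_eq_adjugate_laplacian,
      adjugate_apply_eq_of_row_sum_eq_zero _ D.laplacian_row_sum r r' r,
      adjugate_apply_eq_of_col_sum_eq_zero _ (D.laplacian_col_sum hbal) r' r r']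
  exact_mod_cast h

/-- For a connected Eulerian (balanced) directed multigraph
`D`, the number of spanning arborescences rooted at `r` is the same for every
choice of the root vertex `r`. -/
theorem arborescence_count_root_independent (D : Multidigraph)
    (hconn : D.Connected) (hbal : D.Balanced) (r r' : D.V) :
    D.arbCount r = D.arbCount r' :=
  arborescence_count_root_independent_general D hbal r r'
end

section
/- If G is a connected bipartite graph with color classes E and V, then the dimension of the root polytope Q_G equals |E| + |V| - 2. -/
open scoped Classical

/-- The bipartite graph on vertex set `E ⊕ V` determined by a set of edges
`edges ⊆ E × V` (each pair `(e, v)` is an edge `ev`). -/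
def biGraph {E V : Type} (edges : Set (E × V)) : SimpleGraph (E ⊕ V) :=
  SimpleGraph.fromRel (fun a b => ∃ p ∈ edges, a = Sum.inl p.1 ∧ b = Sum.inr p.2)

/-- The point `𝐞 + 𝐯` of `ℝ^E ⊕ ℝ^V` corresponding to an edge `ev`. -/
noncomputable def rootPt (E V : Type) (p : E × V) : (E → ℝ) × (V → ℝ) :=
  (Pi.single p.1 1, Pi.single p.2 1)

/-- The root polytope of the bipartite graph with edge set `edges`. -/
noncomputable def rootPolytope {E V : Type} (edges : Set (E × V)) :
    Set ((E → ℝ) × (V → ℝ)) :=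
  convexHull ℝ (rootPt E V '' edges)

/-- Auxiliary: the vector attached to a vertex of the bipartite graph. -/
noncomputable def chiPt (E V : Type) : E ⊕ V → (E → ℝ) × (V → ℝ) :=
  Sum.elim (fun e => (Pi.single e 1, 0)) (fun v => (0, Pi.single v 1))

/-- The sum-of-coordinates linear map. -/
noncomputable def sumMapL (E : Type) [Fintype E] : (E → ℝ) →ₗ[ℝ] ℝ :=
  ∑ e, LinearMap.proj e

lemma sumMapL_apply {E : Type} [Fintype E] (x : E → ℝ) :
    sumMapL E x = ∑ e, x e := by
  simp [sumMapL]

/-- The subspace of pairs whose coordinate sums both vanish. -/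
noncomputable def WSub (E V : Type) [Fintype E] [Fintype V] :
    Submodule ℝ ((E → ℝ) × (V → ℝ)) :=
  LinearMap.ker ((sumMapL E).prodMap (sumMapL V))

lemma mem_WSub {E V : Type} [Fintype E] [Fintype V] (z : (E → ℝ) × (V → ℝ)) :
    z ∈ WSub E V ↔ (∑ e, z.1 e) = 0 ∧ (∑ v, z.2 v) = 0 := by
  simp [WSub, LinearMap.mem_ker, LinearMap.prodMap_apply, sumMapL_apply, Prod.ext_iff]

lemma finrank_WSub {E V : Type} [Fintype E] [Fintype V]
    (hE : Nonempty E) (hV : Nonempty V) :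
    Module.finrank ℝ (WSub E V) = Fintype.card E + Fintype.card V - 2 := by
  obtain ⟨e0⟩ := hE
  obtain ⟨v0⟩ := hV
  have hsurj : Function.Surjective ((sumMapL E).prodMap (sumMapL V)) := by
    rintro ⟨a, b⟩
    refine ⟨(Pi.single e0 a, Pi.single v0 b), ?_⟩
    simp [LinearMap.prodMap_apply, sumMapL_apply, Finset.sum_pi_single]
  have hrank := LinearMap.finrank_range_add_finrank_ker ((sumMapL E).prodMap (sumMapL V))
  rw [LinearMap.range_eq_top.mpr hsurj] at hrank
  have h1 : Module.finrank ℝ (⊤ : Submodule ℝ (ℝ × ℝ)) = 2 := by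
    simp [finrank_top]
  have h2 : Module.finrank ℝ ((E → ℝ) × (V → ℝ)) = Fintype.card E + Fintype.card V := by
    simp [Module.finrank_prod, Module.finrank_pi]
  rw [h1, h2] at hrank
  have h3 : Module.finrank ℝ (WSub E V)
      = Module.finrank ℝ (LinearMap.ker ((sumMapL E).prodMap (sumMapL V))) := rfl
  rw [h3]
  omega

/-- If `G` is a connected bipartite graph with color classes
`E` and `V`, then the dimension of the root polytope `Q_G` (the dimension of
its affine hull) equals `|E| + |V| - 2`. -/
theorem rootPolytope_dim {E V : Type} [Fintype E] [Fintype V]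
    (edges : Set (E × V)) (hconn : (biGraph edges).Connected) :
    Module.finrank ℝ (affineSpan ℝ (rootPt E V '' edges)).direction =
      Fintype.card E + Fintype.card V - 2 := by
  rcases Set.eq_empty_or_nonempty edges with hemp | ⟨⟨e0, v0⟩, h0⟩
  · -- degenerate case: no edges, so by connectivity there is at most one vertex
    subst hemp
    have hadj : ∀ a b : E ⊕ V, ¬ (biGraph (∅ : Set (E × V))).Adj a b := by
      intro a b h
      rw [biGraph, SimpleGraph.fromRel_adj] at h
      simp at h
    have hsub : Subsingleton (E ⊕ V) := by
      constructor
      intro a b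
      obtain ⟨w⟩ := hconn.preconnected a b
      cases w with
      | nil => rfl
      | cons h _ => exact absurd h (hadj _ _)
    have hcard : Fintype.card E + Fintype.card V ≤ 1 := by
      rw [← Fintype.card_sum]
      exact Fintype.card_le_one_iff_subsingleton.mpr hsub
    have : Fintype.card E + Fintype.card V - 2 = 0 := by omega
    rw [this]
    simp [Set.image_empty]
  · -- main case
    set M := affineSpan ℝ (rootPt E V '' edges) with hM
    set D := M.direction with hD
    have hrootmem : ∀ p ∈ edges, rootPt E V p ∈ M := fun p hp =>
      subset_affineSpan ℝ _ ⟨p, hp, rfl⟩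
    have hchisum : ∀ p : E × V, chiPt E V (Sum.inl p.1) + chiPt E V (Sum.inr p.2)
        = rootPt E V p := by
      intro p
      ext i <;> simp [chiPt, rootPt]
    -- adjacency gives membership of the sum of the two vertex vectors
    have hadj : ∀ a b : E ⊕ V, (biGraph edges).Adj a b →
        a.isLeft ≠ b.isLeft ∧ chiPt E V a + chiPt E V b ∈ M := by
      intro a b h
      rw [biGraph, SimpleGraph.fromRel_adj] at h
      rcases h.2 with ⟨p, hp, rfl, rfl⟩ | ⟨p, hp, rfl, rfl⟩
      · refine ⟨by simp, ?_⟩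
        rw [hchisum]
        exact hrootmem p hp
      · refine ⟨by simp, ?_⟩
        rw [add_comm, hchisum]
        exact hrootmem p hp
    -- the walk lemma
    have hwalk : ∀ a b : E ⊕ V, (biGraph edges).Walk a b →
        (a.isLeft = b.isLeft → chiPt E V a - chiPt E V b ∈ D) ∧
        (a.isLeft ≠ b.isLeft → chiPt E V a + chiPt E V b ∈ M) := by
      intro a b w
      induction w with
      | nil =>
        exact ⟨fun _ => by simp, fun h => absurd rfl h⟩
      | @cons a b c h q ih =>
        obtain ⟨hab, hsum⟩ := hadj a b h
        constructor
        · intro hac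
          have hbc : b.isLeft ≠ c.isLeft := fun hbc => hab (hac ▸ hbc.symm ▸ rfl)
          have h2 := ih.2 hbc
          have heq : chiPt E V a - chiPt E V c
              = (chiPt E V a + chiPt E V b) - (chiPt E V b + chiPt E V c) := by abel
          rw [heq]
          exact AffineSubspace.vsub_mem_direction hsum h2
        · intro hac
          have hbc : b.isLeft = c.isLeft := by
            cases hb : b.isLeft <;> cases hc : c.isLeft <;> cases ha : a.isLeft <;>
              simp_all
          have h1 := ih.1 hbc
          have heq : chiPt E V a + chiPt E V c
              = -(chiPt E V b - chiPt E V c) + (chiPt E V a + chiPt E V b) := by abel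
          rw [heq]
          exact AffineSubspace.vadd_mem_of_mem_direction (neg_mem h1) hsum
    have hreach : ∀ a b : E ⊕ V, a.isLeft = b.isLeft →
        chiPt E V a - chiPt E V b ∈ D := by
      intro a b hab
      obtain ⟨w⟩ := hconn.preconnected a b
      exact (hwalk a b w).1 hab
    -- the direction equals the codimension-2 subspace `WSub`
    have hDW : D = WSub E V := by
      apply le_antisymm
      · rw [hD, hM, direction_affineSpan, vectorSpan_def]
        rw [Submodule.span_le]
        rintro z ⟨p1, ⟨q1, hq1, rfl⟩, p2, ⟨q2, hq2, rfl⟩, rfl⟩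
        rw [SetLike.mem_coe, mem_WSub]
        constructor <;>
          simp [rootPt, Finset.sum_sub_distrib, Finset.sum_pi_single]
      · rintro ⟨x, y⟩ hz
        rw [mem_WSub] at hz
        obtain ⟨hx, hy⟩ := hz
        simp only at hx hy
        have hx' : ∑ e, x e • (Pi.single e (1:ℝ) : E → ℝ) = x := by
          have h : ∀ e : E, x e • (Pi.single e (1:ℝ) : E → ℝ) = Pi.single e (x e) := by
            intro e; ext j; simp [Pi.single_apply]
          simp only [h]; exact Finset.univ_sum_single x
        have hy' : ∑ v, y v • (Pi.single v (1:ℝ) : V → ℝ) = y := by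
          have h : ∀ v : V, y v • (Pi.single v (1:ℝ) : V → ℝ) = Pi.single v (y v) := by
            intro v; ext j; simp [Pi.single_apply]
          simp only [h]; exact Finset.univ_sum_single y
        have hx0 : ∑ e, x e • (Pi.single e0 (1:ℝ) : E → ℝ) = 0 := by
          rw [← Finset.sum_smul, hx, zero_smul]
        have hy0 : ∑ v, y v • (Pi.single v0 (1:ℝ) : V → ℝ) = 0 := by
          rw [← Finset.sum_smul, hy, zero_smul]
        have key : (x, y) =
            (∑ e, x e • (chiPt E V (Sum.inl e) - chiPt E V (Sum.inl e0))) +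
            (∑ v, y v • (chiPt E V (Sum.inr v) - chiPt E V (Sum.inr v0))) := by
          rw [Prod.ext_iff]
          constructor
          · simp only [Prod.fst_add, Prod.fst_sum, Prod.smul_fst, Prod.fst_sub, chiPt,
              Sum.elim_inl, Sum.elim_inr, sub_self, smul_zero, sub_zero, smul_sub,
              Finset.sum_const_zero, add_zero, Finset.sum_sub_distrib, hx', hx0, sub_zero]
          · simp only [Prod.snd_add, Prod.snd_sum, Prod.smul_snd, Prod.snd_sub, chiPt,
              Sum.elim_inl, Sum.elim_inr, sub_self, smul_zero, sub_zero, smul_sub,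
              Finset.sum_const_zero, zero_add, Finset.sum_sub_distrib, hy', hy0, sub_zero]
        rw [key]
        refine add_mem (Submodule.sum_mem _ fun e _ => Submodule.smul_mem _ _ ?_)
          (Submodule.sum_mem _ fun v _ => Submodule.smul_mem _ _ ?_)
        · exact hreach _ _ rfl
        · exact hreach _ _ rfl
    rw [hDW]
    exact finrank_WSub ⟨e0⟩ ⟨v0⟩
end

section
/- Let G be a connected bipartite graph with color classes E and V. A set of edges T of G forms a spanning tree of G if and only if the corresponding set of vertices {𝐞 + 𝐯 : ev ∈ T} of the root polytope Q_G is affinely independent and spans the affine hull of Q_G (i.e., is the vertex set of a maximal-dimensional simplex contained in Q_G). -/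
/-!
All points `𝐞 + 𝐯` lie on the hyperplane `∑ₑ xₑ = 1`, so affine independence and affine spans
of them reduce to linear independence and linear spans. Writing `𝐞 + 𝐯 = 𝐞 - (-𝐯)` and
telescoping along a walk shows that `𝐞 + 𝐯` lies in the span of the points of an edge set `S`
exactly when `e` and `v` are joined in `S`. Hence the points of `T` are independent iff every
edge of `T` is a bridge, i.e. `T` is acyclic, and they span those of `G` iff every edge of the
connected graph `G` has its ends joined in `T`, i.e. `T` is connected.
-/

open scoped Classical

section AffineHyperplane

variable {k W ι : Type*} [Ring k] [AddCommGroup W] [Module k W]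

theorem affineIndependent_iff_linearIndependent_of_eq_one (f : W →ₗ[k] k) {p : ι → W}
    (hp : ∀ i, f (p i) = 1) : AffineIndependent k p ↔ LinearIndependent k p := by
  refine ⟨fun h => linearIndependent_iff'.2 fun s g hg i hi => ?_,
    LinearIndependent.affineIndependent k⟩
  have hsum : ∑ i ∈ s, g i = 0 := by simpa [hp] using congrArg f hg
  exact affineIndependent_iff.1 h s g hsum hg i hi

theorem mem_affineSpan_iff_of_eq_one [Nontrivial k] (f : W →ₗ[k] k) {s : Set W}
    (hs : ∀ x ∈ s, f x = 1) {x : W} : x ∈ affineSpan k s ↔ x ∈ Submodule.span k s ∧ f x = 1 := by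
  constructor
  · intro hx
    refine ⟨affineSpan_subset_span hx, ?_⟩
    have hfx : f x ∈ affineSpan k (f '' s) :=
      AffineSubspace.map_span f.toAffineMap s ▸ AffineSubspace.mem_map_of_mem _ hx
    have hsub : f '' s ⊆ {1} := by rintro - ⟨y, hy, rfl⟩; exact hs y hy
    simpa using affineSpan_mono k hsub hfx
  · rintro ⟨hx, hfx⟩
    obtain ⟨n, c, y, rfl⟩ := Submodule.mem_span_set'.1 hx
    have hc : ∑ i, c i = 1 := by simpa [hs _ (y _).2] using hfx
    rw [← Finset.univ.affineCombination_eq_linear_combination _ _ hc]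
    refine affineSpan_mono k ?_ (affineCombination_mem_affineSpan hc (fun i => (y i : W)))
    rintro - ⟨i, rfl⟩
    exact (y i).2

theorem affineSpan_eq_iff_span_eq_of_eq_one [Nontrivial k] (f : W →ₗ[k] k) {s t : Set W}
    (hs : ∀ x ∈ s, f x = 1) (ht : ∀ x ∈ t, f x = 1) :
    affineSpan k s = affineSpan k t ↔ Submodule.span k s = Submodule.span k t := by
  refine ⟨fun h => le_antisymm ?_ ?_, fun h => ?_⟩
  · exact Submodule.span_le.2 ((subset_affineSpan k s).trans (h ▸ affineSpan_subset_span))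
  · exact Submodule.span_le.2 ((subset_affineSpan k t).trans (h ▸ affineSpan_subset_span))
  · ext x
    rw [mem_affineSpan_iff_of_eq_one f hs, mem_affineSpan_iff_of_eq_one f ht, h]

end AffineHyperplane

theorem SimpleGraph.Preconnected.of_adj_imp_reachable {α : Type*} {G H : SimpleGraph α}
    (hG : G.Preconnected) (h : ∀ ⦃x y⦄, G.Adj x y → H.Reachable x y) : H.Preconnected := by
  intro x y
  obtain ⟨w⟩ := hG x y
  induction w with
  | nil => rfl
  | cons hadj _ ih => exact (h hadj).trans ih

section RootPoints

variable {E V : Type}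

theorem biGraph_adj {S : Set (E × V)} {x y : E ⊕ V} :
    (biGraph S).Adj x y ↔ ∃ q ∈ S, s(x, y) = s(Sum.inl q.1, Sum.inr q.2) := by
  simp only [biGraph, SimpleGraph.fromRel_adj, Sym2.eq_iff]
  aesop

theorem edgeSet_biGraph (S : Set (E × V)) :
    (biGraph S).edgeSet = (fun q => s(Sum.inl q.1, Sum.inr q.2)) '' S := by
  ext e
  induction e using Sym2.ind with
  | h x y => simp [biGraph_adj, eq_comm]

theorem biGraph_deleteEdges_singleton (S : Set (E × V)) (q : E × V) :
    (biGraph S).deleteEdges {s(Sum.inl q.1, Sum.inr q.2)} = biGraph (S \ {q}) := by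
  ext x y
  simp only [SimpleGraph.deleteEdges_adj, biGraph_adj, Set.mem_singleton_iff, Set.mem_sdiff]
  constructor
  · rintro ⟨⟨r, hr, hxy⟩, hq⟩
    exact ⟨r, ⟨hr, by rintro rfl; exact hq hxy⟩, hxy⟩
  · rintro ⟨r, ⟨hr, hrq⟩, hxy⟩
    refine ⟨⟨r, hr, hxy⟩, fun h => hrq ?_⟩
    simpa [Sym2.eq_iff, Prod.ext_iff] using hxy.symm.trans h

/-- Chosen so that `rootPt (e, v) = signedVec e - signedVec v` telescopes along walks. -/
noncomputable def signedVec : E ⊕ V → (E → ℝ) × (V → ℝ) :=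
  Sum.elim (fun e => (Pi.single e 1, 0)) (fun v => (0, -Pi.single v 1))

theorem rootPt_eq_signedVec_sub (q : E × V) :
    rootPt E V q = signedVec (Sum.inl q.1) - signedVec (Sum.inr q.2) := by
  simp [rootPt, signedVec]

theorem signedVec_sub_mem_span_of_adj {S : Set (E × V)} {x y : E ⊕ V}
    (h : (biGraph S).Adj x y) :
    signedVec x - signedVec y ∈ Submodule.span ℝ (rootPt E V '' S) := by
  obtain ⟨q, hq, hxy⟩ := biGraph_adj.1 h
  have hmem : rootPt E V q ∈ Submodule.span ℝ (rootPt E V '' S) :=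
    Submodule.subset_span ⟨q, hq, rfl⟩
  rcases Sym2.eq_iff.1 hxy with ⟨rfl, rfl⟩ | ⟨rfl, rfl⟩
  · rwa [← rootPt_eq_signedVec_sub]
  · rw [← neg_sub, ← rootPt_eq_signedVec_sub]
    exact neg_mem hmem

theorem SimpleGraph.Reachable.signedVec_sub_mem_span {S : Set (E × V)} {x y : E ⊕ V}
    (h : (biGraph S).Reachable x y) :
    signedVec x - signedVec y ∈ Submodule.span ℝ (rootPt E V '' S) := by
  obtain ⟨w⟩ := h
  induction w with
  | nil => simp
  | cons hadj _ ih =>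
    simpa using add_mem (signedVec_sub_mem_span_of_adj hadj) ih

variable [Fintype E] [Fintype V]

noncomputable def cutFunctional (C : Set (E ⊕ V)) : (E → ℝ) × (V → ℝ) →ₗ[ℝ] ℝ :=
  Fintype.linearCombination ℝ (fun e => C.indicator 1 (Sum.inl e)) ∘ₗ LinearMap.fst ℝ _ _ -
    Fintype.linearCombination ℝ (fun v => C.indicator 1 (Sum.inr v)) ∘ₗ LinearMap.snd ℝ _ _

theorem cutFunctional_signedVec (C : Set (E ⊕ V)) (x : E ⊕ V) :
    cutFunctional C (signedVec x) = C.indicator 1 x := by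
  cases x <;> simp [cutFunctional, signedVec, Fintype.linearCombination_apply_single]

theorem cutFunctional_rootPt (C : Set (E ⊕ V)) (q : E × V) :
    cutFunctional C (rootPt E V q) =
      C.indicator 1 (Sum.inl q.1) - C.indicator 1 (Sum.inr q.2) := by
  rw [rootPt_eq_signedVec_sub, map_sub, cutFunctional_signedVec, cutFunctional_signedVec]

theorem cutFunctional_range_inl_rootPt (q : E × V) :
    cutFunctional (Set.range Sum.inl) (rootPt E V q) = 1 := by
  simp [cutFunctional_rootPt]

/-- The cut functional of the component of `e` vanishes on the span but is `1` on `𝐞 + 𝐯`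
when `v` lies outside that component. -/
theorem rootPt_mem_span_iff_reachable (S : Set (E × V)) (q : E × V) :
    rootPt E V q ∈ Submodule.span ℝ (rootPt E V '' S) ↔
      (biGraph S).Reachable (Sum.inl q.1) (Sum.inr q.2) := by
  refine ⟨fun hq => ?_, fun h => rootPt_eq_signedVec_sub q ▸ h.signedVec_sub_mem_span⟩
  by_contra hnr
  set C := {x | (biGraph S).Reachable (Sum.inl q.1) x}
  have hker : Submodule.span ℝ (rootPt E V '' S) ≤ LinearMap.ker (cutFunctional C) := by
    rw [Submodule.span_le]
    rintro - ⟨r, hr, rfl⟩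
    have hadj : (biGraph S).Adj (Sum.inl r.1) (Sum.inr r.2) := biGraph_adj.2 ⟨r, hr, rfl⟩
    have hiff : Sum.inl r.1 ∈ C ↔ Sum.inr r.2 ∈ C :=
      ⟨fun h => h.trans hadj.reachable, fun h => h.trans hadj.symm.reachable⟩
    simp [cutFunctional_rootPt, Set.indicator_apply, hiff]
  have h1 : Sum.inl q.1 ∈ C := SimpleGraph.Reachable.refl _
  have h0 : Sum.inr q.2 ∉ C := hnr
  simpa [cutFunctional_rootPt, h1, h0] using hker hq

theorem linearIndependent_rootPt_iff_isAcyclic (T : Set (E × V)) :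
    LinearIndependent ℝ (fun p : T => rootPt E V p) ↔ (biGraph T).IsAcyclic := by
  rw [linearIndependent_iff_notMem_span, SimpleGraph.isAcyclic_iff_forall_isBridge,
    edgeSet_biGraph, Set.forall_mem_image, Subtype.forall]
  refine forall₂_congr fun q hq => ?_
  have himage :
      (fun p : T => rootPt E V p) '' (Set.univ \ {⟨q, hq⟩}) = rootPt E V '' (T \ {q}) := by
    rw [← Function.comp_def, Set.image_comp, Set.image_sdiff Subtype.val_injective,
      Set.image_univ, Subtype.range_coe, Set.image_singleton]
  rw [SimpleGraph.isBridge_iff, biGraph_deleteEdges_singleton, ← rootPt_mem_span_iff_reachable,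
    himage]

theorem connected_biGraph_iff_span_eq {edges : Set (E × V)} (hconn : (biGraph edges).Connected)
    {T : Set (E × V)} (hT : T ⊆ edges) :
    (biGraph T).Connected ↔
      Submodule.span ℝ (rootPt E V '' T) = Submodule.span ℝ (rootPt E V '' edges) := by
  refine ⟨fun h => le_antisymm (Submodule.span_mono (Set.image_mono hT)) ?_, fun h => ?_⟩
  · rw [Submodule.span_le]
    rintro - ⟨q, -, rfl⟩
    exact (rootPt_mem_span_iff_reachable T q).2 (h.preconnected _ _)
  · have : Nonempty (E ⊕ V) := hconn.nonempty
    refine ⟨hconn.preconnected.of_adj_imp_reachable fun x y hxy => ?_⟩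
    obtain ⟨q, hq, hxy⟩ := biGraph_adj.1 hxy
    have hr := (rootPt_mem_span_iff_reachable T q).1 (h ▸ Submodule.subset_span ⟨q, hq, rfl⟩)
    rcases Sym2.eq_iff.1 hxy with ⟨rfl, rfl⟩ | ⟨rfl, rfl⟩
    exacts [hr, hr.symm]

end RootPoints

/-- Let `G` be a connected bipartite graph with color classes
`E` and `V`.  A set `T` of edges of `G` forms a spanning tree of `G` if and
only if the corresponding set of vertices `{𝐞 + 𝐯 : ev ∈ T}` of the root
polytope `Q_G` is affinely independent and spans the affine hull of `Q_G`
(i.e., it is the vertex set of a maximal-dimensional simplex in `Q_G`). -/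
theorem spanning_tree_iff_maximal_simplex {E V : Type} [Fintype E] [Fintype V]
    (edges : Set (E × V)) (hconn : (biGraph edges).Connected)
    (T : Set (E × V)) (hT : T ⊆ edges) :
    (biGraph T).IsTree ↔
      (AffineIndependent ℝ (fun p : T => rootPt E V p) ∧
        affineSpan ℝ (rootPt E V '' T) = affineSpan ℝ (rootPt E V '' edges)) := by
  have hf (S : Set (E × V)) : ∀ x ∈ rootPt E V '' S, cutFunctional (Set.range Sum.inl) x = 1 := by
    rintro - ⟨q, -, rfl⟩
    exact cutFunctional_range_inl_rootPt q
  rw [affineIndependent_iff_linearIndependent_of_eq_one (p := fun p : T => rootPt E V p) _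
      fun p => hf T _ ⟨p, p.prop, rfl⟩,
    affineSpan_eq_iff_span_eq_of_eq_one _ (hf T) (hf edges),
    linearIndependent_rootPt_iff_isAcyclic, ← connected_biGraph_iff_span_eq hconn hT]
  exact ⟨fun h => ⟨h.isAcyclic, h.connected⟩, fun ⟨hacyc, hconnT⟩ => ⟨hconnT, hacyc⟩⟩
end

section
/- In a triangulation of the root polytope Q_G of a connected bipartite graph G into simplices corresponding to spanning trees, two maximal simplices σ_T and σ_{T'} (for spanning trees T, T') intersect in a common face if and only if the simplex spanned by the common edges T ∩ T' is a face of each; in particular, their intersection is conv{𝐞 + 𝐯 : ev ∈ T ∩ T'} when T and T' are compatible. -/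
/-!
Both directions rest on the fact that an extreme subset of a convex hull is the hull of the
generators it contains. Forward: the intersection, being extreme in `σ_T`, is the hull of the
points `𝐞 + 𝐯` (`ev ∈ T`) lying in `σ_{T'}`; pairing against `𝐞 + 𝐯` itself shows that such a
point is a vertex of `σ_{T'}`, i.e. `ev ∈ T'`. Backward: every edge `q` of a forest `T` is a
bridge, so the side of `T - q` containing the `E`-end of `q`, weighted `-1` on `E` and `+1` on
`V`, pairs with the vertices `𝐞 + 𝐯` of `σ_T` to `-δ_{ev,q}`. Summing over `q ∈ T \ A` gives a
functional that is `≤ 0` on `σ_T` and vanishes exactly on the vertices from `A`, so `conv A` is a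
face of `σ_T`.
-/

open scoped Classical

section Faces

variable {𝕜 E : Type*} [Field 𝕜] [LinearOrder 𝕜] [IsStrictOrderedRing 𝕜] [AddCommGroup E]
  [Module 𝕜 E] {s t A F : Set E}

theorem IsExtreme.subset_convexHull_inter (hF : IsExtreme 𝕜 (convexHull 𝕜 s) F) :
    F ⊆ convexHull 𝕜 (s ∩ F) := by
  intro x hxF
  have hx := hF.1 hxF
  rw [convexHull_eq_union_convexHull_finite_subsets, Set.mem_iUnion₂] at hx
  obtain ⟨u, hus, hxu⟩ := hx
  induction u using Finset.induction_on generalizing x with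
  | empty => simp at hxu
  | insert a u _ ih =>
    rw [Finset.coe_insert, Set.insert_subset_iff] at hus
    obtain rfl | hu := u.eq_empty_or_nonempty
    · obtain rfl : x = a := by simpa using hxu
      exact subset_convexHull 𝕜 _ ⟨hus.1, hxF⟩
    rw [Finset.coe_insert, convexHull_insert (Finset.coe_nonempty.2 hu)] at hxu
    simp only [mem_convexJoin, Set.mem_singleton_iff, exists_eq_left] at hxu
    obtain ⟨y, hyu, hxy⟩ := hxu
    have hys : y ∈ convexHull 𝕜 s := convexHull_mono hus.2 hyu
    rw [← insert_endpoints_openSegment] at hxy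
    rcases hxy with rfl | rfl | hxy
    · exact subset_convexHull 𝕜 _ ⟨hus.1, hxF⟩
    · exact ih hxF hus.2 hyu
    · have haF := hF.left_mem_of_mem_openSegment (subset_convexHull 𝕜 s hus.1) hys hxF hxy
      have hyF := hF.right_mem_of_mem_openSegment (subset_convexHull 𝕜 s hus.1) hys hxF hxy
      exact (convex_convexHull 𝕜 _).segment_subset (subset_convexHull 𝕜 (s ∩ F) ⟨hus.1, haF⟩)
        (ih hyF hus.2 hyu) (openSegment_subset_segment _ _ _ hxy)

theorem isExtreme_sep_eq_of_forall_le {ℓ : E →ₗ[𝕜] 𝕜} {c : 𝕜} (h : ∀ x ∈ A, ℓ x ≤ c) :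
    IsExtreme 𝕜 A {x ∈ A | ℓ x = c} := by
  refine ⟨fun x hx => hx.1, fun x₁ hx₁ x₂ hx₂ x ⟨_, hxc⟩ hx => ⟨hx₁, (h x₁ hx₁).antisymm ?_⟩⟩
  exact hxc ▸ (ℓ.convexOn convex_univ).le_left_of_right_le trivial trivial hx (hxc ▸ h x₂ hx₂)

theorem convexHull_inter_setOf_eq_of_forall_le {ℓ : E →ₗ[𝕜] 𝕜} {c : 𝕜}
    (h : ∀ x ∈ s, ℓ x ≤ c) :
    convexHull 𝕜 (s ∩ {x | ℓ x = c}) = {x ∈ convexHull 𝕜 s | ℓ x = c} := by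
  have hle : ∀ x ∈ convexHull 𝕜 s, ℓ x ≤ c := fun x hx =>
    convexHull_min h (convex_halfSpace_le ℓ.isLinear c) hx
  refine (convexHull_min ?_ ?_).antisymm
    ((isExtreme_sep_eq_of_forall_le hle).subset_convexHull_inter.trans (convexHull_mono ?_))
  · exact fun x hx => ⟨subset_convexHull 𝕜 s hx.1, hx.2⟩
  · exact (convex_convexHull 𝕜 s).inter (convex_hyperplane ℓ.isLinear c)
  · exact fun x hx => ⟨hx.1, hx.2.2⟩

theorem convexHull_inter_convexHull_eq_of_isExtreme
    (h : IsExtreme 𝕜 (convexHull 𝕜 s) (convexHull 𝕜 s ∩ convexHull 𝕜 t))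
    (hst : s ∩ convexHull 𝕜 t ⊆ t) :
    convexHull 𝕜 s ∩ convexHull 𝕜 t = convexHull 𝕜 (s ∩ t) := by
  refine h.subset_convexHull_inter.trans (convexHull_mono ?_) |>.antisymm ?_
  · exact fun x hx => ⟨hx.1, hst ⟨hx.1, hx.2.2⟩⟩
  · exact Set.subset_inter (convexHull_mono Set.inter_subset_left)
      (convexHull_mono Set.inter_subset_right)

end Faces

section RootPolytope

variable {E V : Type} [Fintype E] [Fintype V]

noncomputable def dotPairing (f : (E → ℝ) × (V → ℝ)) : ((E → ℝ) × (V → ℝ)) →ₗ[ℝ] ℝ :=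
  (dotProductBilin ℝ ℝ f.1).coprod (dotProductBilin ℝ ℝ f.2)

theorem dotPairing_rootPt (f : (E → ℝ) × (V → ℝ)) (p : E × V) :
    dotPairing f (rootPt E V p) = f.1 p.1 + f.2 p.2 := by
  simp [dotPairing, rootPt, dotProduct_single]

theorem rootPt_mem_convexHull_image_iff {S : Set (E × V)} {p : E × V} :
    rootPt E V p ∈ convexHull ℝ (rootPt E V '' S) ↔ p ∈ S := by
  refine ⟨fun h => ?_, fun h => subset_convexHull ℝ _ (Set.mem_image_of_mem _ h)⟩
  have hval (q : E × V) : dotPairing (rootPt E V p) (rootPt E V q) =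
      (if q.1 = p.1 then 1 else 0) + (if q.2 = p.2 then 1 else 0) := by
    rw [dotPairing_rootPt]
    simp [rootPt, Pi.single_apply]
  have hle : ∀ x ∈ rootPt E V '' S, dotPairing (rootPt E V p) x ≤ 2 := by
    rintro _ ⟨q, -, rfl⟩
    rw [hval]
    split_ifs <;> norm_num
  have hp : rootPt E V p ∈
      convexHull ℝ (rootPt E V '' S ∩ {x | dotPairing (rootPt E V p) x = 2}) := by
    rw [convexHull_inter_setOf_eq_of_forall_le hle]
    exact ⟨h, by rw [hval]; norm_num⟩
  obtain ⟨_, ⟨q, hq, rfl⟩, hq2⟩ := convexHull_nonempty_iff.1 ⟨_, hp⟩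
  have hqp : q = p := by
    rw [Set.mem_ofPred_eq, hval] at hq2
    split_ifs at hq2 with h₁ h₂ <;> first | exact Prod.ext h₁ h₂ | norm_num at hq2
  exact hqp ▸ hq

theorem rootPt_injective : Function.Injective (rootPt E V) := fun p q h =>
  rootPt_mem_convexHull_image_iff (S := {q}).1 (by simp [h])

end RootPolytope

section BiGraph

variable {E V : Type} {S T : Set (E × V)}

theorem biGraph_adj_inl_inr {a : E} {b : V} :
    (biGraph S).Adj (.inl a) (.inr b) ↔ (a, b) ∈ S := by
  simp [biGraph]

theorem biGraph_sdiff_singleton_le (q : E × V) :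
    biGraph (S \ {q}) ≤ (biGraph S).deleteEdges {s(.inl q.1, .inr q.2)} := by
  have key {p : E × V} (hp : p ∈ S \ {q}) :
      ((biGraph S).deleteEdges {s(.inl q.1, .inr q.2)}).Adj (.inl p.1) (.inr p.2) := by
    simpa [biGraph_adj_inl_inr, Prod.ext_iff] using hp
  rintro u v ⟨-, ⟨p, hp, rfl, rfl⟩ | ⟨p, hp, rfl, rfl⟩⟩
  exacts [key hp, (key hp).symm]

theorem not_reachable_biGraph_sdiff_singleton (hT : (biGraph T).IsAcyclic) {q : E × V}
    (hq : q ∈ T) : ¬(biGraph (T \ {q})).Reachable (.inl q.1) (.inr q.2) := fun h =>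
  SimpleGraph.isAcyclic_iff_forall_adj_isBridge.1 hT (biGraph_adj_inl_inr.2 hq)
    (h.mono (biGraph_sdiff_singleton_le q))

end BiGraph

section Forest

variable {E V : Type} [Fintype E] [Fintype V] {T : Set (E × V)}

theorem exists_linearMap_rootPt_eq_of_isAcyclic (hT : (biGraph T).IsAcyclic) (A : Set (E × V)) :
    ∃ ℓ : ((E → ℝ) × (V → ℝ)) →ₗ[ℝ] ℝ, ∀ p ∈ T, ℓ (rootPt E V p) = if p ∈ A then 0 else -1 := by
  -- `q` is a bridge of `T`, so `q.2` does not lie on the side of `q.1` in `T - q`.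
  let side (q : E × V) (u : E ⊕ V) : ℝ :=
    if (biGraph (T \ {q})).Reachable (.inl q.1) u then 1 else 0
  have hside : ∀ q ∈ T, ∀ p ∈ T,
      side q (.inr p.2) - side q (.inl p.1) = if p = q then -1 else 0 := by
    intro q hq p hp
    split_ifs with hpq
    · subst hpq
      simp [side, not_reachable_biGraph_sdiff_singleton hT hq]
    · have hadj : (biGraph (T \ {q})).Adj (.inl p.1) (.inr p.2) :=
        biGraph_adj_inl_inr.2 ⟨hp, hpq⟩
      have hiff : (biGraph (T \ {q})).Reachable (.inl q.1) (.inr p.2) ↔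
          (biGraph (T \ {q})).Reachable (.inl q.1) (.inl p.1) :=
        ⟨fun h => h.trans hadj.reachable.symm, fun h => h.trans hadj.reachable⟩
      simp [side, hiff]
  let D := (T \ A).toFinset
  refine ⟨dotPairing (fun a => -∑ q ∈ D, side q (.inl a), fun b => ∑ q ∈ D, side q (.inr b)),
    fun p hp => ?_⟩
  rw [dotPairing_rootPt, neg_add_eq_sub, ← Finset.sum_sub_distrib,
    Finset.sum_congr rfl fun q hq => hside q (Set.mem_toFinset.1 hq).1 p hp, Finset.sum_ite_eq]
  simp [D, hp]

theorem isExtreme_convexHull_image_rootPt_of_isAcyclic (hT : (biGraph T).IsAcyclic)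
    {A : Set (E × V)} (hA : A ⊆ T) :
    IsExtreme ℝ (convexHull ℝ (rootPt E V '' T)) (convexHull ℝ (rootPt E V '' A)) := by
  obtain ⟨ℓ, hℓ⟩ := exists_linearMap_rootPt_eq_of_isAcyclic hT A
  have hle : ∀ x ∈ rootPt E V '' T, ℓ x ≤ 0 := by
    rintro _ ⟨p, hp, rfl⟩
    rw [hℓ p hp]
    split_ifs <;> norm_num
  have hface : rootPt E V '' T ∩ {x | ℓ x = 0} = rootPt E V '' A := by
    ext x
    constructor
    · rintro ⟨⟨p, hp, rfl⟩, hp0⟩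
      rw [Set.mem_ofPred_eq, hℓ p hp] at hp0
      split_ifs at hp0 with hpA
      · exact ⟨p, hpA, rfl⟩
      · norm_num at hp0
    · rintro ⟨p, hpA, rfl⟩
      exact ⟨⟨p, hA hpA, rfl⟩, by rw [Set.mem_ofPred_eq, hℓ p (hA hpA), if_pos hpA]⟩
  rw [← hface, convexHull_inter_setOf_eq_of_forall_le hle]
  exact isExtreme_sep_eq_of_forall_le fun x hx =>
    convexHull_min hle (convex_halfSpace_le ℓ.isLinear 0) hx

end Forest

theorem simplices_common_face_iff_general {E V : Type} [Fintype E] [Fintype V]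
    (T T' : Set (E × V))
    (htree : (biGraph T).IsTree) (htree' : (biGraph T').IsTree) :
    (IsExtreme ℝ (convexHull ℝ (rootPt E V '' T))
        (convexHull ℝ (rootPt E V '' T) ∩ convexHull ℝ (rootPt E V '' T')) ∧
      IsExtreme ℝ (convexHull ℝ (rootPt E V '' T'))
        (convexHull ℝ (rootPt E V '' T) ∩ convexHull ℝ (rootPt E V '' T'))) ↔
      convexHull ℝ (rootPt E V '' T) ∩ convexHull ℝ (rootPt E V '' T') =
        convexHull ℝ (rootPt E V '' (T ∩ T')) := by
  refine ⟨fun ⟨h, _⟩ => ?_, fun h => ?_⟩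
  · have hvert : rootPt E V '' T ∩ convexHull ℝ (rootPt E V '' T') ⊆ rootPt E V '' T' := by
      rintro _ ⟨⟨p, -, rfl⟩, hp⟩
      exact Set.mem_image_of_mem _ (rootPt_mem_convexHull_image_iff.1 hp)
    rw [Set.image_inter rootPt_injective]
    exact convexHull_inter_convexHull_eq_of_isExtreme h hvert
  · rw [h]
    exact ⟨isExtreme_convexHull_image_rootPt_of_isAcyclic htree.2 Set.inter_subset_left,
      isExtreme_convexHull_image_rootPt_of_isAcyclic htree'.2 Set.inter_subset_right⟩

/-- For spanning trees `T`, `T'` of a connected bipartite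
graph `G`, the maximal simplices `σ_T = conv{𝐞 + 𝐯 : ev ∈ T}` and `σ_{T'}`
intersect in a common face (face = extreme subset) if and only if their
intersection is exactly the simplex spanned by the common edges, i.e.
`conv{𝐞 + 𝐯 : ev ∈ T ∩ T'}`. -/
theorem simplices_common_face_iff {E V : Type} [Fintype E] [Fintype V]
    (edges : Set (E × V)) (hconn : (biGraph edges).Connected)
    (T T' : Set (E × V)) (hT : T ⊆ edges) (hT' : T' ⊆ edges)
    (htree : (biGraph T).IsTree) (htree' : (biGraph T').IsTree) :
    (IsExtreme ℝ (convexHull ℝ (rootPt E V '' T))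
        (convexHull ℝ (rootPt E V '' T) ∩ convexHull ℝ (rootPt E V '' T')) ∧
      IsExtreme ℝ (convexHull ℝ (rootPt E V '' T'))
        (convexHull ℝ (rootPt E V '' T) ∩ convexHull ℝ (rootPt E V '' T'))) ↔
      convexHull ℝ (rootPt E V '' T) ∩ convexHull ℝ (rootPt E V '' T') =
        convexHull ℝ (rootPt E V '' (T ∩ T')) :=
  simplices_common_face_iff_general T T' htree htree'
end
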